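/- Fix real numbers 0 ≤ λ1 < λ2 < 1. For all Φ1, Φ2, θ ∈ ℝ, all β0, β1 ∈ 𝔻, and every ψ ∈ D(X), one has ‖(E_{Φ1,θ,β0,β1} − E_{Φ2,θ,β0,β1})ψ‖ ≤ 2π·λ2·|Φ1 − Φ2|·‖Xψ‖. -/

import Mathlib

open scoped ENNReal ComplexConjugate Classical
open Filter MeasureTheory

noncomputable section

abbrev l2Z : Type := lp (fun _ : ℤ => ℂ) 2

/-- The standard basis vector `δ_n` of `ℓ²(ℤ)`. -/
def deltaVec (n : ℤ) : l2Z := lp.single 2 n 1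

/-- Membership in the domain of the position operator `X`. -/
def InDomX (ψ : l2Z) : Prop := Memℓp (fun n : ℤ => (n : ℂ) * ψ n) 2

/-- The position operator `X`, defined (with junk value `0` off its domain). -/
def posX (ψ : l2Z) : l2Z :=
  if h : InDomX ψ then (⟨fun n : ℤ => (n : ℂ) * ψ n, h⟩ : l2Z) else 0

/-- `‖X ψ‖²`, computed as an extended real (possibly `+∞`). -/
def XnormSq (ψ : l2Z) : ℝ≥0∞ := ∑' n : ℤ, ENNReal.ofReal ((n : ℝ) ^ 2 * ‖ψ n‖ ^ 2)

/-- `ρ_n = √(1 - |α_n|²)`. -/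
def cmvRho (α : ℤ → ℂ) (n : ℤ) : ℝ := Real.sqrt (1 - ‖α n‖ ^ 2)

/-- The pointwise action of `M = ⊕ₙ Θ(α_{2n+1})` (blocks acting on the pairs
`{2n+1, 2n+2}`): a block `Θ(α_j)` acts on `span{δ_j, δ_{j+1}}` by the matrix
`[[conj α_j, ρ_j], [ρ_j, -α_j]]`. -/
def cmvMApply (α : ℤ → ℂ) (ψ : ℤ → ℂ) : ℤ → ℂ := fun n =>
  if Odd n then conj (α n) * ψ n + (cmvRho α n : ℂ) * ψ (n + 1)
  else (cmvRho α (n - 1) : ℂ) * ψ (n - 1) - α (n - 1) * ψ n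

/-- The pointwise action of `L = ⊕ₙ Θ(α_{2n})` (blocks acting on the pairs `{2n, 2n+1}`). -/
def cmvLApply (α : ℤ → ℂ) (ψ : ℤ → ℂ) : ℤ → ℂ := fun n =>
  if Even n then conj (α n) * ψ n + (cmvRho α n : ℂ) * ψ (n + 1)
  else (cmvRho α (n - 1) : ℂ) * ψ (n - 1) - α (n - 1) * ψ n

/-- `E` is the extended CMV matrix with Verblunsky coefficients `α`: a unitary operator on
`ℓ²(ℤ)` acting pointwise as `E = L M`. -/
def IsECMV (α : ℤ → ℂ) (E : l2Z →L[ℂ] l2Z) : Prop :=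
  E ∈ unitary (l2Z →L[ℂ] l2Z) ∧
    ∀ ψ : l2Z, ∀ n : ℤ, (E ψ) n = cmvLApply α (cmvMApply α (fun m => ψ m)) n

/-- The Verblunsky coefficients of the (locally perturbed) unitary almost-Mathieu operator:
`α₀ = β₀`, `α₁ = β₁`, `α_{2n-1} = λ₂ sin(2π(nΦ+θ))` for `n ≠ 1`, and `α_{2n} = √(1-λ₁²)`
for `n ≠ 0`. -/
def uamoAlpha (lam1 lam2 Phi theta : ℝ) (beta0 beta1 : ℂ) : ℤ → ℂ := fun n =>
  if n = 0 then beta0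
  else if n = 1 then beta1
  else if Odd n then
    ((lam2 * Real.sin (2 * Real.pi * ((((n + 1) / 2 : ℤ) : ℝ) * Phi + theta)) : ℝ) : ℂ)
  else ((Real.sqrt (1 - lam1 ^ 2) : ℝ) : ℂ)

/-!
The Verblunsky coefficients at even sites do not depend on `Φ`, so `E₁ - E₂ = L (M₁ - M₂)` with
a common `L`. A block `[[conj d, r], [r, -d]]` with `r` real multiplies `|x|² + |y|²` by
`|d|² + r²`: this factor is `1` for the blocks of `L`, while for the block of `M₁ - M₂` on
`{2k+1, 2k+2}` it is the squared distance between the points `(λ₂ sin tᵢ, √(1 - λ₂² sin² tᵢ))`,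
`tᵢ = 2π((k+1)Φᵢ + θ)`, of the unit circle. Writing `λ₂ sin tᵢ = sin sᵢ`, the map `t ↦ s` is
`λ₂`-Lipschitz and chords are shorter than arcs, so the factor is at most
`(2πλ₂ (k+1) |Φ₁ - Φ₂|)²`, and `(k+1)²` is at most `n²` at both sites `n` of the block.
-/

open Real

theorem ENNReal.tsum_int_eq_tsum_pair (f : ℤ → ℝ≥0∞) (a : ℤ) :
    ∑' n, f n = ∑' k, (f (2 * k + a) + f (2 * k + a + 1)) := by
  rw [← (Equiv.addRight a).tsum_eq, ← (Int.divModEquiv 2).symm.tsum_eq, ENNReal.tsum_prod']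
  congr 1 with k
  simp [tsum_fintype, Fin.sum_univ_two, mul_comm, add_right_comm]

theorem enorm_sq_add_enorm_sq {E : Type*} [NormedAddCommGroup E] (x y : E) :
    ‖x‖ₑ ^ 2 + ‖y‖ₑ ^ 2 = ENNReal.ofReal (‖x‖ ^ 2 + ‖y‖ ^ 2) := by
  rw [ENNReal.ofReal_add (by positivity) (by positivity), ← ofReal_norm, ← ofReal_norm,
    ← ENNReal.ofReal_pow (norm_nonneg _), ← ENNReal.ofReal_pow (norm_nonneg _)]

theorem lp.ofReal_norm_sq {ι E : Type*} [NormedAddCommGroup E] (v : lp (fun _ : ι => E) 2) :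
    ENNReal.ofReal (‖v‖ ^ 2) = ∑' i, ‖v i‖ₑ ^ 2 := by
  have hp : (0 : ℝ) < (2 : ℝ≥0∞).toReal := by norm_num
  have hsum := (lp.memℓp v).summable hp
  have hnorm := lp.norm_rpow_eq_tsum hp v
  simp only [ENNReal.toReal_ofNat, Real.rpow_two] at hsum hnorm
  rw [hnorm, ENNReal.ofReal_tsum_of_nonneg (fun _ => by positivity) hsum]
  simp_rw [ENNReal.ofReal_pow (norm_nonneg _), ofReal_norm]

theorem lp.norm_le_of_tsum_enorm_sq_le {ι E : Type*} [NormedAddCommGroup E]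
    {v w : lp (fun _ : ι => E) 2} {c : ℝ} (hc : 0 ≤ c)
    (h : ∑' i, ‖v i‖ₑ ^ 2 ≤ ENNReal.ofReal (c ^ 2) * ∑' i, ‖w i‖ₑ ^ 2) : ‖v‖ ≤ c * ‖w‖ := by
  rw [← lp.ofReal_norm_sq, ← lp.ofReal_norm_sq, ← ENNReal.ofReal_mul (by positivity),
    ENNReal.ofReal_le_ofReal_iff (by positivity), ← mul_pow] at h
  exact (pow_le_pow_iff_left₀ (norm_nonneg _) (by positivity) two_ne_zero).mp h

theorem norm_sq_add_norm_sq_block (d x y : ℂ) (r : ℝ) :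
    ‖conj d * x + r * y‖ ^ 2 + ‖r * x - d * y‖ ^ 2 = (‖d‖ ^ 2 + r ^ 2) * (‖x‖ ^ 2 + ‖y‖ ^ 2) := by
  simp only [← Complex.normSq_eq_norm_sq, Complex.normSq_apply, Complex.add_re, Complex.add_im,
    Complex.sub_re, Complex.sub_im, Complex.mul_re, Complex.mul_im, Complex.conj_re,
    Complex.conj_im, Complex.ofReal_re, Complex.ofReal_im]
  ring

theorem abs_arcsin_mul_sin_sub_le {l : ℝ} (hl0 : 0 ≤ l) (hl1 : l < 1) (x y : ℝ) :
    |arcsin (l * sin x) - arcsin (l * sin y)| ≤ l * |x - y| := by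
  have hlt : ∀ t, (l * sin t) ^ 2 < 1 := fun t => by
    nlinarith [sin_sq_le_one t, mul_pow l (sin t) 2]
  have hderiv : ∀ t, HasDerivAt (fun t => arcsin (l * sin t))
      (1 / √(1 - (l * sin t) ^ 2) * (l * cos t)) t := fun t =>
    (hasDerivAt_arcsin (by nlinarith [hlt t]) (by nlinarith [hlt t])).comp t
      ((hasDerivAt_sin t).const_mul l)
  have hbound : ∀ t, ‖1 / √(1 - (l * sin t) ^ 2) * (l * cos t)‖ ≤ l := fun t => by
    have hpos : 0 < √(1 - (l * sin t) ^ 2) := sqrt_pos.mpr (by linarith [hlt t])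
    have hcos : |cos t| ≤ √(1 - (l * sin t) ^ 2) := by
      rw [← sqrt_sq_eq_abs]
      gcongr
      have hl2 : l ^ 2 * sin t ^ 2 ≤ sin t ^ 2 :=
        mul_le_of_le_one_left (sq_nonneg _) (by nlinarith)
      nlinarith [sin_sq_add_cos_sq t, mul_pow l (sin t) 2]
    rw [norm_mul, norm_mul, Real.norm_of_nonneg hl0, Real.norm_eq_abs, Real.norm_eq_abs,
      abs_of_pos (one_div_pos.mpr hpos), one_div_mul_eq_div, div_le_iff₀ hpos]
    exact mul_le_mul_of_nonneg_left hcos hl0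
  simpa [Real.norm_eq_abs] using Convex.norm_image_sub_le_of_norm_hasDerivWithin_le
    (fun t _ => (hderiv t).hasDerivWithinAt) (fun t _ => hbound t) convex_univ
    (Set.mem_univ y) (Set.mem_univ x)

theorem sq_sin_sub_add_sq_cos_sub_le (s t : ℝ) :
    (sin s - sin t) ^ 2 + (cos s - cos t) ^ 2 ≤ (s - t) ^ 2 := by
  have hexpand : (sin s - sin t) ^ 2 + (cos s - cos t) ^ 2 = 2 - 2 * cos (s - t) := by
    rw [cos_sub]
    nlinarith [sin_sq_add_cos_sq s, sin_sq_add_cos_sq t]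
  nlinarith [one_sub_sq_div_two_le_cos (x := s - t)]

theorem sq_mul_sin_sub_add_sq_sqrt_sub_le {l : ℝ} (hl0 : 0 ≤ l) (hl1 : l < 1) (x y : ℝ) :
    (l * sin x - l * sin y) ^ 2 + (√(1 - (l * sin x) ^ 2) - √(1 - (l * sin y) ^ 2)) ^ 2
      ≤ l ^ 2 * (x - y) ^ 2 := by
  have hmem : ∀ t, -1 ≤ l * sin t ∧ l * sin t ≤ 1 := fun t => by
    constructor <;> nlinarith [neg_one_le_sin t, sin_le_one t]
  calc _ = (sin (arcsin (l * sin x)) - sin (arcsin (l * sin y))) ^ 2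
        + (cos (arcsin (l * sin x)) - cos (arcsin (l * sin y))) ^ 2 := by
          rw [sin_arcsin (hmem x).1 (hmem x).2, sin_arcsin (hmem y).1 (hmem y).2, cos_arcsin,
            cos_arcsin]
    _ ≤ (arcsin (l * sin x) - arcsin (l * sin y)) ^ 2 := sq_sin_sub_add_sq_cos_sub_le _ _
    _ = |arcsin (l * sin x) - arcsin (l * sin y)| ^ 2 := (sq_abs _).symm
    _ ≤ (l * |x - y|) ^ 2 := by gcongr; exact abs_arcsin_mul_sin_sub_le hl0 hl1 x y
    _ = l ^ 2 * (x - y) ^ 2 := by rw [mul_pow, sq_abs]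

theorem cmvLApply_congr {α β : ℤ → ℂ} (h : ∀ n, Even n → α n = β n) :
    cmvLApply α = cmvLApply β := by
  ext χ n
  by_cases hn : Even n
  · simp only [cmvLApply, if_pos hn, cmvRho, h n hn]
  · have hn' : Even (n - 1) := by rw [Int.even_sub_one]; exact hn
    simp only [cmvLApply, if_neg hn, cmvRho, h _ hn']

theorem cmvLApply_sub (α χ χ' : ℤ → ℂ) :
    cmvLApply α (χ - χ') = cmvLApply α χ - cmvLApply α χ' := by
  ext n
  simp only [cmvLApply, Pi.sub_apply]
  split_ifs <;> ring

theorem tsum_enorm_sq_cmvLApply {α : ℤ → ℂ} (hα : ∀ n, Even n → ‖α n‖ ≤ 1) (χ : ℤ → ℂ) :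
    ∑' n, ‖cmvLApply α χ n‖ₑ ^ 2 = ∑' n, ‖χ n‖ₑ ^ 2 := by
  rw [ENNReal.tsum_int_eq_tsum_pair (fun n => ‖cmvLApply α χ n‖ₑ ^ 2) 0,
    ENNReal.tsum_int_eq_tsum_pair (fun n => ‖χ n‖ₑ ^ 2) 0]
  congr 1 with k
  have he : Even (2 * k) := even_two_mul k
  have ho : ¬ Even (2 * k + 1) := Int.not_even_two_mul_add_one k
  have hρ : ‖α (2 * k)‖ ^ 2 + cmvRho α (2 * k) ^ 2 = 1 := by
    rw [cmvRho, sq_sqrt (by nlinarith [hα _ he, norm_nonneg (α (2 * k))])]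
    ring
  simp only [add_zero, enorm_sq_add_enorm_sq, cmvLApply, if_pos he, if_neg ho,
    add_sub_cancel_right]
  rw [norm_sq_add_norm_sq_block, hρ, one_mul]

theorem tsum_enorm_sq_cmvMApply_sub_le {α β : ℤ → ℂ} {c : ℝ}
    (h : ∀ k : ℤ, ‖α (2 * k + 1) - β (2 * k + 1)‖ ^ 2
      + (cmvRho α (2 * k + 1) - cmvRho β (2 * k + 1)) ^ 2 ≤ (c * (k + 1)) ^ 2)
    (ψ : ℤ → ℂ) :
    ∑' n, ‖cmvMApply α ψ n - cmvMApply β ψ n‖ₑ ^ 2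
      ≤ ENNReal.ofReal (c ^ 2) * ∑' n : ℤ, ‖(n : ℂ) * ψ n‖ₑ ^ 2 := by
  rw [ENNReal.tsum_int_eq_tsum_pair (fun n => ‖cmvMApply α ψ n - cmvMApply β ψ n‖ₑ ^ 2) 1,
    ENNReal.tsum_int_eq_tsum_pair (fun n : ℤ => ‖(n : ℂ) * ψ n‖ₑ ^ 2) 1, ← ENNReal.tsum_mul_left]
  refine ENNReal.tsum_le_tsum fun k => ?_
  have ho : Odd (2 * k + 1) := odd_two_mul_add_one k
  have he : ¬ Odd (2 * k + 1 + 1) := Int.not_odd_iff_even.mpr ⟨k + 1, by ring⟩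
  have hweight₁ : ((k : ℝ) + 1) ^ 2 ≤ ((2 * k + 1 : ℤ) : ℝ) ^ 2 := by
    have : (k + 1) ^ 2 ≤ (2 * k + 1) ^ 2 := by rcases le_or_gt 0 k with hk | hk <;> nlinarith
    exact_mod_cast this
  have hweight₂ : ((k : ℝ) + 1) ^ 2 ≤ ((2 * k + 1 + 1 : ℤ) : ℝ) ^ 2 := by
    push_cast; nlinarith [sq_nonneg ((k : ℝ) + 1)]
  have hblock : ‖cmvMApply α ψ (2 * k + 1) - cmvMApply β ψ (2 * k + 1)‖ ^ 2
      + ‖cmvMApply α ψ (2 * k + 1 + 1) - cmvMApply β ψ (2 * k + 1 + 1)‖ ^ 2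
      = (‖α (2 * k + 1) - β (2 * k + 1)‖ ^ 2 + (cmvRho α (2 * k + 1) - cmvRho β (2 * k + 1)) ^ 2)
        * (‖ψ (2 * k + 1)‖ ^ 2 + ‖ψ (2 * k + 1 + 1)‖ ^ 2) := by
    rw [← norm_sq_add_norm_sq_block]
    simp only [cmvMApply, if_pos ho, if_neg he, add_sub_cancel_right, map_sub,
      Complex.ofReal_sub]
    ring_nf
  rw [enorm_sq_add_enorm_sq, enorm_sq_add_enorm_sq, ← ENNReal.ofReal_mul (sq_nonneg c)]
  refine ENNReal.ofReal_le_ofReal ?_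
  rw [hblock, norm_mul, norm_mul, mul_pow, mul_pow, Complex.norm_intCast, Complex.norm_intCast,
    sq_abs, sq_abs]
  calc _ ≤ (c * (k + 1)) ^ 2 * (‖ψ (2 * k + 1)‖ ^ 2 + ‖ψ (2 * k + 1 + 1)‖ ^ 2) := by
        gcongr; exact h k
    _ = c ^ 2 * ((k + 1) ^ 2 * ‖ψ (2 * k + 1)‖ ^ 2 + (k + 1) ^ 2 * ‖ψ (2 * k + 1 + 1)‖ ^ 2) := by
        ring
    _ ≤ _ := by gcongr c ^ 2 * (?_ * _ + ?_ * _)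

theorem posX_apply {ψ : l2Z} (hψ : InDomX ψ) (n : ℤ) : posX ψ n = n * ψ n := by
  rw [posX, dif_pos hψ]

section UnitaryAlmostMathieu

variable {lam1 lam2 theta : ℝ} {beta0 beta1 : ℂ}

theorem uamoAlpha_of_even {n : ℤ} (hn : Even n) {Phi Phi' : ℝ} :
    uamoAlpha lam1 lam2 Phi theta beta0 beta1 n = uamoAlpha lam1 lam2 Phi' theta beta0 beta1 n := by
  simp only [uamoAlpha, Int.not_odd_iff_even.mpr hn, if_false]

theorem norm_uamoAlpha_of_even_le (hb0 : ‖beta0‖ ≤ 1) {n : ℤ} (hn : Even n) {Phi : ℝ} :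
    ‖uamoAlpha lam1 lam2 Phi theta beta0 beta1 n‖ ≤ 1 := by
  have hn1 : n ≠ 1 := by rintro rfl; exact Int.not_even_one hn
  simp only [uamoAlpha, Int.not_odd_iff_even.mpr hn, hn1, if_false]
  split_ifs
  · exact hb0
  · rw [Complex.norm_real, Real.norm_of_nonneg (sqrt_nonneg _)]
    exact sqrt_le_one.mpr (by nlinarith)

theorem uamoAlpha_one {Phi : ℝ} : uamoAlpha lam1 lam2 Phi theta beta0 beta1 1 = beta1 := by
  simp [uamoAlpha]

theorem uamoAlpha_two_mul_add_one {k : ℤ} (hk : k ≠ 0) {Phi : ℝ} :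
    uamoAlpha lam1 lam2 Phi theta beta0 beta1 (2 * k + 1)
      = (lam2 * sin (2 * π * ((k + 1) * Phi + theta)) : ℝ) := by
  have hdiv : (2 * k + 1 + 1) / 2 = k + 1 := by omega
  simp only [uamoAlpha, odd_two_mul_add_one, hdiv, if_true, Int.cast_add, Int.cast_one,
    show 2 * k + 1 ≠ 0 by omega, show 2 * k + 1 ≠ 1 by omega, if_false]

theorem uamoAlpha_block_le (hl0 : 0 ≤ lam2) (hl1 : lam2 < 1) {Phi1 Phi2 : ℝ} (k : ℤ) :
    ‖uamoAlpha lam1 lam2 Phi1 theta beta0 beta1 (2 * k + 1)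
        - uamoAlpha lam1 lam2 Phi2 theta beta0 beta1 (2 * k + 1)‖ ^ 2
      + (cmvRho (uamoAlpha lam1 lam2 Phi1 theta beta0 beta1) (2 * k + 1)
        - cmvRho (uamoAlpha lam1 lam2 Phi2 theta beta0 beta1) (2 * k + 1)) ^ 2
      ≤ (2 * π * lam2 * |Phi1 - Phi2| * (k + 1)) ^ 2 := by
  rcases eq_or_ne k 0 with rfl | hk
  · simpa [cmvRho, uamoAlpha_one] using sq_nonneg (2 * π * lam2 * |Phi1 - Phi2|)
  · simp only [cmvRho, uamoAlpha_two_mul_add_one hk, ← Complex.ofReal_sub,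
      Complex.norm_real, Real.norm_eq_abs, sq_abs]
    calc _ ≤ lam2 ^ 2
          * (2 * π * ((k + 1) * Phi1 + theta) - 2 * π * ((k + 1) * Phi2 + theta)) ^ 2 :=
          sq_mul_sin_sub_add_sq_sqrt_sub_le hl0 hl1 _ _
      _ = _ := by simp only [mul_pow, sq_abs]; ring

end UnitaryAlmostMathieu

theorem stmt_11_general
    (lam1 lam2 : ℝ) (h1 : 0 ≤ lam1) (h12 : lam1 < lam2) (h2 : lam2 < 1)
    (Phi1 Phi2 theta : ℝ) (beta0 beta1 : ℂ) (hb0 : ‖beta0‖ < 1)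
    (E1 E2 : l2Z →L[ℂ] l2Z)
    (hE1 : IsECMV (uamoAlpha lam1 lam2 Phi1 theta beta0 beta1) E1)
    (hE2 : IsECMV (uamoAlpha lam1 lam2 Phi2 theta beta0 beta1) E2)
    (ψ : l2Z) (hψ : InDomX ψ) :
    ‖E1 ψ - E2 ψ‖ ≤ 2 * Real.pi * lam2 * |Phi1 - Phi2| * ‖posX ψ‖ := by
  set α₁ := uamoAlpha lam1 lam2 Phi1 theta beta0 beta1
  set α₂ := uamoAlpha lam1 lam2 Phi2 theta beta0 beta1
  have hl0 : 0 ≤ lam2 := h1.trans h12.le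
  have hL : cmvLApply α₂ = cmvLApply α₁ := cmvLApply_congr fun n hn => uamoAlpha_of_even hn
  have hdiff : ∀ n, (E1 ψ - E2 ψ) n = cmvLApply α₁ (cmvMApply α₁ ψ - cmvMApply α₂ ψ) n := by
    intro n
    rw [cmvLApply_sub, lp.coeFn_sub, Pi.sub_apply, Pi.sub_apply, hE1.2, hE2.2, hL]
  refine lp.norm_le_of_tsum_enorm_sq_le (by positivity) ?_
  calc ∑' n, ‖(E1 ψ - E2 ψ) n‖ₑ ^ 2 = ∑' n, ‖cmvMApply α₁ ψ n - cmvMApply α₂ ψ n‖ₑ ^ 2 := by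
        simp_rw [hdiff]
        exact tsum_enorm_sq_cmvLApply (fun n hn => norm_uamoAlpha_of_even_le hb0.le hn) _
    _ ≤ _ := tsum_enorm_sq_cmvMApply_sub_le (uamoAlpha_block_le hl0 h2) _
    _ = _ := by simp_rw [posX_apply hψ]

/-- Fix `0 ≤ λ₁ < λ₂ < 1`.  For all `Φ₁, Φ₂, θ ∈ ℝ`, `β₀, β₁ ∈ 𝔻`, and every
`ψ ∈ D(X)`, one has `‖(E_{Φ₁,θ,β₀,β₁} - E_{Φ₂,θ,β₀,β₁})ψ‖ ≤ 2πλ₂|Φ₁ - Φ₂|·‖Xψ‖`. -/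
theorem stmt_11
    (lam1 lam2 : ℝ) (h1 : 0 ≤ lam1) (h12 : lam1 < lam2) (h2 : lam2 < 1)
    (Phi1 Phi2 theta : ℝ) (beta0 beta1 : ℂ) (hb0 : ‖beta0‖ < 1) (hb1 : ‖beta1‖ < 1)
    (E1 E2 : l2Z →L[ℂ] l2Z)
    (hE1 : IsECMV (uamoAlpha lam1 lam2 Phi1 theta beta0 beta1) E1)
    (hE2 : IsECMV (uamoAlpha lam1 lam2 Phi2 theta beta0 beta1) E2)
    (ψ : l2Z) (hψ : InDomX ψ) :
    ‖E1 ψ - E2 ψ‖ ≤ 2 * Real.pi * lam2 * |Phi1 - Phi2| * ‖posX ψ‖ :=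
  stmt_11_general lam1 lam2 h1 h12 h2 Phi1 Phi2 theta beta0 beta1 hb0 E1 E2 hE1 hE2 ψ hψ
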